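/- Let T : C(X) → C(X) be fully order preserving with induced map y : X* → X* on linear parts of affine functions. Then y is a bijection, and for each x ∈ X both u ↦ ⟨y(u), x⟩ and u ↦ ⟨y⁻¹(u), x⟩ are quasiconvex functions on X*. -/

import Mathlib

open Set

noncomputable section

variable {X : Type*}

/-- The class of proper, lower semicontinuous, convex functions `X → ℝ ∪ {+∞}`,
encoded as `EReal`-valued functions never taking the value `⊥`. -/
def IsClFun (X : Type*) [NormedAddCommGroup X] [NormedSpace ℝ X] (f : X → EReal) : Prop :=
  (∀ x, f x ≠ ⊥) ∧ (∃ x, f x ≠ ⊤) ∧ LowerSemicontinuous f ∧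
  ∀ x y : X, ∀ a b : ℝ, 0 ≤ a → 0 ≤ b → a + b = 1 →
    f (a • x + b • y) ≤ (a : EReal) * f x + (b : EReal) * f y

/-- `C(X)`, as a subtype. -/
abbrev Cl (X : Type*) [NormedAddCommGroup X] [NormedSpace ℝ X] :=
  {f : X → EReal // IsClFun X f}

/-- The continuous affine function `h_{u,α}(x) = ⟨u,x⟩ + α`. -/
def aff [NormedAddCommGroup X] [NormedSpace ℝ X] (u : X →L[ℝ] ℝ) (α : ℝ) : X → EReal :=
  fun x => ((u x + α : ℝ) : EReal)

theorem affMem [NormedAddCommGroup X] [NormedSpace ℝ X] (u : X →L[ℝ] ℝ) (α : ℝ) :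
    IsClFun X (aff u α) := by
  refine ⟨fun x => EReal.coe_ne_bot _, ⟨0, EReal.coe_ne_top _⟩, ?_, ?_⟩
  · exact (continuous_coe_real_ereal.comp (by continuity)).lowerSemicontinuous
  · intro x y a b ha hb hab
    simp only [aff, map_add, map_smul, smul_eq_mul]
    rw [← EReal.coe_mul, ← EReal.coe_mul, ← EReal.coe_add, EReal.coe_le_coe_iff]
    have h : a * α + b * α = α := by rw [← add_mul, hab, one_mul]
    nlinarith

/-- `h_{u,α}` as an element of `C(X)`. -/
def affCl [NormedAddCommGroup X] [NormedSpace ℝ X] (u : X →L[ℝ] ℝ) (α : ℝ) : Cl X :=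
  ⟨aff u α, affMem u α⟩

/-- An operator on `C(X)` is fully order preserving if it is onto and
`f ≤ g ↔ T f ≤ T g` (pointwise order). -/
def FullyOrderPreserving [NormedAddCommGroup X] [NormedSpace ℝ X]
    (T : Cl X → Cl X) : Prop :=
  Function.Surjective T ∧ ∀ f g : Cl X, f.1 ≤ g.1 ↔ (T f).1 ≤ (T g).1


/-- A real-valued function on the dual is quasiconvex. -/
def QCvx [NormedAddCommGroup X] [NormedSpace ℝ X] (φ : (X →L[ℝ] ℝ) → ℝ) : Prop :=
  ∀ u v : X →L[ℝ] ℝ, ∀ s : ℝ, 0 ≤ s → s ≤ 1 →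
    φ (s • u + (1 - s) • v) ≤ max (φ u) (φ v)

/-! Comparing images of affine functions under the order isomorphism `T`, and using that
`h_{u,α} ≤ h_{v,β}` iff `u = v` and `α ≤ β`, shows that `y` is injective. A closed proper convex
function is the supremum of its continuous affine minorants (separate a point below the graph from
the epigraph), so a function whose affine minorants all have the same slope is affine. Every affine
minorant of `T⁻¹ h_{w,c}` has slope `y⁻¹ w`, hence `T⁻¹` maps affine functions to affine functions
with linear part `y⁻¹`.

For quasiconvexity, `h_{su+(1-s)v,0} ≤ max (h_{u,0}, h_{v,0}) ≤ T⁻¹ (max (T h_{u,0}, T h_{v,0}))`,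
so `T h_{su+(1-s)v,0} ≤ max (h_{y u,a}, h_{y v,b})`; evaluating at `t • x` with `t → ∞` gives
`⟨y (su+(1-s)v), x⟩ ≤ max ⟨y u, x⟩ ⟨y v, x⟩`. The same argument for `T⁻¹` handles `y⁻¹`. -/

theorem le_of_forall_pos_mul_add_le {a b K L : ℝ} (h : ∀ t : ℝ, 0 < t → t * a + K ≤ t * b + L) :
    a ≤ b := by
  by_contra! hba
  have hpos : 0 < a - b := sub_pos.2 hba
  have ht := h ((|L - K| + 1) / (a - b)) (by positivity)
  have hscale : (|L - K| + 1) / (a - b) * (a - b) = |L - K| + 1 := div_mul_cancel₀ _ hpos.ne'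
  linarith [le_abs_self (L - K)]

section Affine

variable [NormedAddCommGroup X] [NormedSpace ℝ X]

@[simp]
theorem affCl_val (u : X →L[ℝ] ℝ) (α : ℝ) : (affCl u α).1 = aff u α := rfl

theorem aff_le_aff_iff {u v : X →L[ℝ] ℝ} {α β : ℝ} : aff u α ≤ aff v β ↔ u = v ∧ α ≤ β := by
  refine ⟨fun h => ?_, fun ⟨huv, hαβ⟩ x => ?_⟩
  · have hle : ∀ x, u x + α ≤ v x + β := fun x => EReal.coe_le_coe_iff.1 (h x)
    have hslope : ∀ x, u x ≤ v x := fun x =>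
      le_of_forall_pos_mul_add_le fun t _ => by simpa using hle (t • x)
    refine ⟨ContinuousLinearMap.ext fun x => (hslope x).antisymm ?_, by simpa using hle 0⟩
    simpa using hslope (-x)
  · subst huv
    exact EReal.coe_le_coe_iff.2 (by linarith)

theorem aff_le_of_forall_coe {f : X → EReal} (hf : ∀ x, f x ≠ ⊥) {u : X →L[ℝ] ℝ} {α : ℝ}
    (h : ∀ x (p : ℝ), f x = p → u x + α ≤ p) : aff u α ≤ f := by
  intro x
  induction hfx : f x using EReal.rec with
  | bot => exact absurd hfx (hf x)
  | coe p => exact EReal.coe_le_coe_iff.2 (h x p hfx)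
  | top => exact le_top

theorem aff_combo_le {f : X → EReal} {u v : X →L[ℝ] ℝ} {α s : ℝ} (hs : 0 ≤ s) (hs1 : s ≤ 1)
    (hu : aff u α ≤ f) (hv : aff v α ≤ f) : aff (s • u + (1 - s) • v) α ≤ f := by
  refine fun x => le_trans ?_ (max_le (hu x) (hv x))
  rw [aff, aff, aff, ← EReal.coe_strictMono.monotone.map_max, EReal.coe_le_coe_iff,
    max_add_add_right]
  gcongr
  simpa using Convex.combo_le_max (u x) (v x) hs (sub_nonneg.2 hs1) (add_sub_cancel s 1)

theorem le_max_of_forall_add_le_max {w u v : X →L[ℝ] ℝ} {c a b : ℝ}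
    (h : ∀ x, w x + c ≤ max (u x + a) (v x + b)) (x : X) : w x ≤ max (u x) (v x) := by
  refine le_of_forall_pos_mul_add_le (K := c) (L := max a b) fun t ht => ?_
  calc t * w x + c = w (t • x) + c := by simp
    _ ≤ max (u (t • x) + a) (v (t • x) + b) := h _
    _ ≤ max (u (t • x)) (v (t • x)) + max a b := max_add_add_le_max_add_max
    _ = t * max (u x) (v x) + max a b := by simp [mul_max_of_nonneg _ _ ht.le]

theorem isClFun_coe_of_convexOn {φ : X → ℝ} (hcont : Continuous φ) (hconv : ConvexOn ℝ univ φ) :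
    IsClFun X (fun x => (φ x : EReal)) := by
  refine ⟨fun x => EReal.coe_ne_bot _, ⟨0, EReal.coe_ne_top _⟩,
    (continuous_coe_real_ereal.comp hcont).lowerSemicontinuous, fun x y a b ha hb hab => ?_⟩
  rw [← EReal.coe_mul, ← EReal.coe_mul, ← EReal.coe_add, EReal.coe_le_coe_iff]
  exact hconv.2 (mem_univ x) (mem_univ y) ha hb hab

def supAffCl (u : X →L[ℝ] ℝ) (a : ℝ) (v : X →L[ℝ] ℝ) (b : ℝ) : Cl X :=
  ⟨fun x => ((max (u x + a) (v x + b) : ℝ) : EReal),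
    isClFun_coe_of_convexOn (by fun_prop)
      (((u.toLinearMap.convexOn convex_univ).add_const a).sup
        ((v.toLinearMap.convexOn convex_univ).add_const b))⟩

theorem aff_le_supAffCl_left (u : X →L[ℝ] ℝ) (a : ℝ) (v : X →L[ℝ] ℝ) (b : ℝ) :
    aff u a ≤ (supAffCl u a v b).1 :=
  fun _ => EReal.coe_le_coe_iff.2 (le_max_left _ _)

theorem aff_le_supAffCl_right (u : X →L[ℝ] ℝ) (a : ℝ) (v : X →L[ℝ] ℝ) (b : ℝ) :
    aff v b ≤ (supAffCl u a v b).1 :=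
  fun _ => EReal.coe_le_coe_iff.2 (le_max_right _ _)

theorem apply_le_max_of_aff_le_supAffCl {w u v : X →L[ℝ] ℝ} {c a b : ℝ}
    (h : aff w c ≤ (supAffCl u a v b).1) (x : X) : w x ≤ max (u x) (v x) :=
  le_max_of_forall_add_le_max (fun x => EReal.coe_le_coe_iff.1 (h x)) x

end Affine

namespace IsClFun

variable [NormedAddCommGroup X] [NormedSpace ℝ X] {f : X → EReal}

theorem exists_eq_coe (hf : IsClFun X f) : ∃ (x : X) (p : ℝ), f x = p := by
  obtain ⟨x, hx⟩ := hf.2.1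
  exact ⟨x, (f x).toReal, (EReal.coe_toReal hx (hf.1 x)).symm⟩

theorem convex_epigraph (hf : IsClFun X f) : Convex ℝ {p : X × ℝ | f p.1 ≤ p.2} := by
  rintro ⟨x, r⟩ hx ⟨x', r'⟩ hx' a b ha hb hab
  calc f (a • x + b • x') ≤ a * f x + b * f x' := hf.2.2.2 x x' a b ha hb hab
    _ ≤ a * r + b * r' := add_le_add (mul_le_mul_of_nonneg_left hx (by exact_mod_cast ha))
        (mul_le_mul_of_nonneg_left hx' (by exact_mod_cast hb))
    _ = ((a * r + b * r' : ℝ) : EReal) := by norm_cast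

/-- Hahn–Banach separation of `(x₀, r₀)` from the epigraph: a non-vertical hyperplane gives the
affine minorant, a vertical one the second alternative. -/
theorem exists_aff_le_lt_or_separated (hf : IsClFun X f) {x₀ : X} {r₀ : ℝ}
    (h : (r₀ : EReal) < f x₀) :
    (∃ (u : X →L[ℝ] ℝ) (α : ℝ), aff u α ≤ f ∧ r₀ < u x₀ + α) ∨
      ∃ (v : X →L[ℝ] ℝ) (d : ℝ), (∀ x, f x ≠ ⊤ → v x < d) ∧ d < v x₀ := by
  have hclosed : IsClosed {p : X × ℝ | f p.1 ≤ p.2} :=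
    hf.2.2.1.isClosed_epigraph.preimage (continuous_id.prodMap continuous_coe_real_ereal)
  obtain ⟨F, d, hepi, hx₀⟩ :=
    geometric_hahn_banach_closed_point (x := (x₀, r₀)) hf.convex_epigraph hclosed (not_le.2 h)
  set v := F.comp (ContinuousLinearMap.inl ℝ X ℝ)
  set c := F (0, 1)
  have hF : ∀ x r, F (x, r) = v x + c * r := fun x r => by
    rw [show (x, r) = (x, 0) + r • ((0 : X), (1 : ℝ)) by simp, map_add, map_smul, smul_eq_mul,
      mul_comm]
    rfl
  have hsep : ∀ x (r : ℝ), f x ≤ r → v x + c * r < d := fun x r hr => hF x r ▸ hepi (x, r) hr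
  replace hx₀ : d < v x₀ + c * r₀ := hF x₀ r₀ ▸ hx₀
  clear_value v c
  obtain ⟨x₁, p₁, hx₁⟩ := hf.exists_eq_coe
  -- the epigraph contains the vertical ray above `(x₁, p₁)`
  have hc : c ≤ 0 := le_of_forall_pos_mul_add_le (K := v x₁ + c * p₁) (L := d) fun t ht => by
    have := hsep x₁ (p₁ + t) (by rw [hx₁, EReal.coe_le_coe_iff]; linarith)
    linarith
  rcases hc.lt_or_eq with hc | rfl
  · set k := (-c)⁻¹
    have hk : 0 < k := inv_pos.2 (neg_pos.2 hc)
    have hkc : ∀ r, k * (c * r) = -r := fun r => by simp [k, ← mul_assoc, hc.ne]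
    refine .inl ⟨k • v, -(k * d), aff_le_of_forall_coe hf.1 fun x p hp => ?_, ?_⟩
    · have := mul_lt_mul_of_pos_left (hsep x p hp.le) hk
      simp only [smul_apply, smul_eq_mul]
      linarith [hkc p, mul_add k (v x) (c * p)]
    · have := mul_lt_mul_of_pos_left hx₀ hk
      simp only [smul_apply, smul_eq_mul]
      linarith [hkc r₀, mul_add k (v x₀) (c * r₀)]
  · refine .inr ⟨v, d, fun x hx => ?_, by simpa using hx₀⟩
    simpa using hsep x (f x).toReal (EReal.le_coe_toReal hx)

theorem exists_aff_le (hf : IsClFun X f) : ∃ (u : X →L[ℝ] ℝ) (α : ℝ), aff u α ≤ f := by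
  obtain ⟨x₁, p₁, hx₁⟩ := hf.exists_eq_coe
  have hlt : ((p₁ - 1 : ℝ) : EReal) < f x₁ := by rw [hx₁, EReal.coe_lt_coe_iff]; linarith
  rcases hf.exists_aff_le_lt_or_separated hlt with ⟨u, α, hu, -⟩ | ⟨v, d, hv, hd⟩
  · exact ⟨u, α, hu⟩
  · exact absurd (hv x₁ (by simp [hx₁])) hd.not_gt

theorem exists_aff_le_lt (hf : IsClFun X f) {x₀ : X} {r₀ : ℝ} (h : (r₀ : EReal) < f x₀) :
    ∃ (u : X →L[ℝ] ℝ) (α : ℝ), aff u α ≤ f ∧ r₀ < u x₀ + α := by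
  rcases hf.exists_aff_le_lt_or_separated h with hmin | ⟨v, d, hv, hd⟩
  · exact hmin
  obtain ⟨u₀, α₀, hu₀⟩ := hf.exists_aff_le
  -- tilt a minorant by a multiple `t` of the vertical separator, steep enough to pass above `r₀`
  set t := (|r₀ - (u₀ x₀ + α₀)| + 1) / (v x₀ - d)
  have ht : 0 ≤ t := by have := sub_pos.2 hd; positivity
  have htd : t * (v x₀ - d) = |r₀ - (u₀ x₀ + α₀)| + 1 := div_mul_cancel₀ _ (sub_pos.2 hd).ne'
  refine ⟨u₀ + t • v, α₀ - t * d, aff_le_of_forall_coe hf.1 fun x p hp => ?_, ?_⟩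
  · have hu₀x : u₀ x + α₀ ≤ p := EReal.coe_le_coe_iff.1 (hp ▸ hu₀ x)
    have hvx := mul_le_mul_of_nonneg_left (hv x (by simp [hp])).le ht
    simp only [add_apply, smul_apply, smul_eq_mul]
    linarith
  · simp only [add_apply, smul_apply, smul_eq_mul]
    linarith [le_abs_self (r₀ - (u₀ x₀ + α₀)), mul_sub t (v x₀) d]

theorem eq_aff_of_forall_aff_le (hf : IsClFun X f)
    (hslope : ∀ (u₁ u₂ : X →L[ℝ] ℝ) (α₁ α₂ : ℝ), aff u₁ α₁ ≤ f → aff u₂ α₂ ≤ f → u₁ = u₂) :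
    ∃ (u : X →L[ℝ] ℝ) (β : ℝ), f = aff u β := by
  obtain ⟨u, α₀, hu⟩ := hf.exists_aff_le
  obtain ⟨x₁, p₁, hx₁⟩ := hf.exists_eq_coe
  have hshift : ∀ x₀ x (r : ℝ), (r : EReal) < f x₀ → ((r - u x₀ + u x : ℝ) : EReal) < f x := by
    intro x₀ x r hr
    obtain ⟨u', α, hle, hlt⟩ := hf.exists_aff_le_lt hr
    obtain rfl := hslope u' u α α₀ hle hu
    exact (EReal.coe_lt_coe_iff.2 (by linarith)).trans_le (hle x)
  refine ⟨u, p₁ - u x₁, funext fun x => le_antisymm ?_ ?_⟩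
  · by_contra! hlt
    simpa [hx₁] using hshift x x₁ _ hlt
  · by_contra! hlt
    obtain ⟨q, hq, hq'⟩ := EReal.exists_between_coe_real hlt
    have := hshift x₁ x (q - u x + u x₁)
      (by rw [hx₁, EReal.coe_lt_coe_iff]; linarith [EReal.coe_lt_coe_iff.1 hq'])
    simp only [sub_add_cancel, add_sub_cancel_right] at this
    exact (this.trans hq).false

end IsClFun

namespace FullyOrderPreserving

variable [NormedAddCommGroup X] [NormedSpace ℝ X] {T : Cl X → Cl X}

theorem injective (hT : FullyOrderPreserving T) : Function.Injective T := fun f g hfg =>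
  Subtype.ext (((hT.2 f g).2 (hfg ▸ le_rfl)).antisymm ((hT.2 g f).2 (hfg ▸ le_rfl)))

theorem surjInv (hT : FullyOrderPreserving T) : FullyOrderPreserving (Function.surjInv hT.1) := by
  have hinv := Function.rightInverse_surjInv hT.1
  refine ⟨fun f => ⟨T f, hT.injective (hinv (T f))⟩, fun f g => ?_⟩
  rw [hT.2 (Function.surjInv hT.1 f), hinv, hinv]

variable {y : (X →L[ℝ] ℝ) → (X →L[ℝ] ℝ)} {γ : (X →L[ℝ] ℝ) → ℝ → ℝ}

theorem linear_part_injective (hT : FullyOrderPreserving T)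
    (hrep : ∀ u α, (T (affCl u α)).1 = aff (y u) (γ u α)) : Function.Injective y := by
  have hle : ∀ u v, y u = y v → γ u 0 ≤ γ v 0 → u = v := fun u v huv hγ =>
    (aff_le_aff_iff.1 <| (hT.2 (affCl u 0) (affCl v 0)).2 <| by
      rw [hrep, hrep, huv]; exact aff_le_aff_iff.2 ⟨rfl, hγ⟩).1
  intro u v huv
  rcases le_total (γ u 0) (γ v 0) with hγ | hγ
  exacts [hle u v huv hγ, (hle v u huv.symm hγ).symm]

/-- All affine minorants of `T⁻¹ h_{w,c}` have the same slope, since `T` maps them below `h_{w,c}`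
and `y` is injective. -/
theorem exists_map_affCl_eq (hT : FullyOrderPreserving T)
    (hrep : ∀ u α, (T (affCl u α)).1 = aff (y u) (γ u α)) (w : X →L[ℝ] ℝ) (c : ℝ) :
    ∃ z β, T (affCl z β) = affCl w c := by
  obtain ⟨f, hf⟩ := hT.1 (affCl w c)
  have hslope : ∀ u α, aff u α ≤ f.1 → y u = w := fun u α h =>
    (aff_le_aff_iff.1 (by simpa only [hrep, hf, affCl_val] using (hT.2 (affCl u α) f).1 h)).1
  obtain ⟨z, β, hz⟩ := f.2.eq_aff_of_forall_aff_le fun u₁ u₂ α₁ α₂ h₁ h₂ =>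
    hT.linear_part_injective hrep ((hslope u₁ α₁ h₁).trans (hslope u₂ α₂ h₂).symm)
  exact ⟨z, β, by rw [← hf]; congr 1; exact Subtype.ext hz.symm⟩

theorem linear_part_surjective (hT : FullyOrderPreserving T)
    (hrep : ∀ u α, (T (affCl u α)).1 = aff (y u) (γ u α)) : Function.Surjective y := by
  intro w
  obtain ⟨z, β, hzβ⟩ := hT.exists_map_affCl_eq hrep w 0
  exact ⟨z, (aff_le_aff_iff.1 (by rw [← hrep, hzβ, affCl_val])).1⟩

theorem exists_surjInv_affCl_eq (hT : FullyOrderPreserving T)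
    (hrep : ∀ u α, (T (affCl u α)).1 = aff (y u) (γ u α))
    {g : (X →L[ℝ] ℝ) → (X →L[ℝ] ℝ)} (hg : Function.LeftInverse g y) (w : X →L[ℝ] ℝ) (c : ℝ) :
    ∃ β, Function.surjInv hT.1 (affCl w c) = affCl (g w) β := by
  obtain ⟨z, β, hzβ⟩ := hT.exists_map_affCl_eq hrep w c
  have hyz : y z = w := (aff_le_aff_iff.1 (by rw [← hrep, hzβ, affCl_val])).1
  refine ⟨β, ?_⟩
  rw [← hzβ, Function.leftInverse_surjInv ⟨hT.injective, hT.1⟩, ← hyz, hg]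

theorem quasiconvex_linear_part (hT : FullyOrderPreserving T)
    (hrep : ∀ u α, (T (affCl u α)).1 = aff (y u) (γ u α)) (x : X) : QCvx (fun u => y u x) := by
  intro u v s hs hs1
  obtain ⟨f, hf⟩ := hT.1 (supAffCl (y u) (γ u 0) (y v) (γ v 0))
  have hu : aff u 0 ≤ f.1 :=
    (hT.2 (affCl u 0) f).2 (by rw [hrep, hf]; exact aff_le_supAffCl_left _ _ _ _)
  have hv : aff v 0 ≤ f.1 :=
    (hT.2 (affCl v 0) f).2 (by rw [hrep, hf]; exact aff_le_supAffCl_right _ _ _ _)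
  have hw := (hT.2 (affCl (s • u + (1 - s) • v) 0) f).1 (aff_combo_le hs hs1 hu hv)
  rw [hrep, hf] at hw
  exact apply_le_max_of_aff_le_supAffCl hw x

end FullyOrderPreserving

theorem linear_part_bijective_and_quasiconvex_general
    [NormedAddCommGroup X] [NormedSpace ℝ X]
    (T : Cl X → Cl X) (hT : FullyOrderPreserving T)
    (y : (X →L[ℝ] ℝ) → (X →L[ℝ] ℝ)) (γ : (X →L[ℝ] ℝ) → ℝ → ℝ)
    (hrep : ∀ (u : X →L[ℝ] ℝ) (α : ℝ), (T (affCl u α)).1 = aff (y u) (γ u α)) :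
    Function.Bijective y ∧ (∀ x : X, QCvx (fun u => y u x)) ∧
      ∀ g : (X →L[ℝ] ℝ) → (X →L[ℝ] ℝ),
        Function.LeftInverse g y → Function.RightInverse g y →
          ∀ x : X, QCvx (fun u => g u x) := by
  refine ⟨⟨hT.linear_part_injective hrep, hT.linear_part_surjective hrep⟩,
    hT.quasiconvex_linear_part hrep, fun g hgy _ x => ?_⟩
  choose γ' hγ' using hT.exists_surjInv_affCl_eq hrep hgy
  exact hT.surjInv.quasiconvex_linear_part (fun u α => by rw [hγ' u α, affCl_val]) x

theorem linear_part_bijective_and_quasiconvex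
    [NormedAddCommGroup X] [NormedSpace ℝ X] [CompleteSpace X]
    (T : Cl X → Cl X) (hT : FullyOrderPreserving T)
    (y : (X →L[ℝ] ℝ) → (X →L[ℝ] ℝ)) (γ : (X →L[ℝ] ℝ) → ℝ → ℝ)
    (hrep : ∀ (u : X →L[ℝ] ℝ) (α : ℝ), (T (affCl u α)).1 = aff (y u) (γ u α)) :
    Function.Bijective y ∧ (∀ x : X, QCvx (fun u => y u x)) ∧
      ∀ g : (X →L[ℝ] ℝ) → (X →L[ℝ] ℝ),
        Function.LeftInverse g y → Function.RightInverse g y →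
          ∀ x : X, QCvx (fun u => g u x) :=
  linear_part_bijective_and_quasiconvex_general T hT y γ hrep
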